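/- Let V be a 4-dimensional Lorentzian vector space with orthonormal-type basis {u, s, e₁, e₂} where g(u,u) = −1, g(s,s) = 1, and e₁, e₂ spacelike mutually orthogonal to u and s. Suppose ρ + p ≠ 0, n is a covector with n(s) ≠ 0, η = η¹e₁ + η²e₂ ≠ 0, and the FLRW Riemann tensor R^{RW} (as in the perfect-fluid formula with flow vector u) satisfies R^{RW}(ζ,η,η,v) = R^{sx}(ζ,η,η,v) + (correction by B terms annihilated since n(ζ)=n(η)=n(v)=0) = 0, where ζ = F cosh β u − F sinh β cos α s + c¹e₁ + c²e₂ with c^A satisfying h_{AB}c^Aη^B = 0, and v is constructed so that g(u,v) = −(h_{CD}c^Cc^D) n(s)/(F cosh β) and g(η,v) = 0, g(ζ,v)=0. Then (ρ+p)/2 · n(s) · (h_{CD}c^Cc^D) · (h_{AB}η^Aη^B) = 0, and consequently c¹ = c² = 0. -/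

import Mathlib

/-! With `η ⟂ u` and `v ⟂ η, ζ`, only the term `-(ρ+p)/2 · g(u,ζ) g(u,v) g(η,η)` of the
perfect-fluid curvature survives in `R(ζ,η,η,v)`. Inserting `g(u,ζ) = -F cosh β` and the prescribed
`g(u,v)` turns `R(ζ,η,η,v) = 0` into `(ρ+p)/2 · n(s) · h(c,c) · h(η,η) = 0`; every factor but
`h(c,c)` is nonzero, and positive-definiteness of `h` then forces `c = 0`. -/

section PerfectFluid

variable {𝕜 V : Type*} [Field 𝕜] [AddCommGroup V] [Module 𝕜 V]

/-- The Riemann tensor of an FLRW spacetime with flow vector `u`, written as a perfect fluid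
with density `ρ` and pressure `p`. -/
def perfectFluidRiemann (g : LinearMap.BilinForm 𝕜 V) (u : V) (ρ p : 𝕜) (a b m w : V) : 𝕜 :=
  (ρ + p) / 2 * (g u a * g u m * g b w - g u a * g u w * g b m
    + g u b * g u w * g a m - g u b * g u m * g a w)
  + ρ / 3 * (g a m * g b w - g a w * g b m)

theorem perfectFluidRiemann_of_orthogonal (g : LinearMap.BilinForm 𝕜 V) (u : V) (ρ p : 𝕜)
    {a b w : V} (hub : g u b = 0) (hbw : g b w = 0) (haw : g a w = 0) :
    perfectFluidRiemann g u ρ p a b b w = -((ρ + p) / 2 * g u a * g u w * g b b) := by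
  simp only [perfectFluidRiemann, hub, hbw, haw]
  ring

end PerfectFluid

theorem LinearMap.BilinForm.apply_add_smul_self {R M : Type*} [CommRing R] [AddCommGroup M]
    [Module R M] (g : LinearMap.BilinForm R M) {e₁ e₂ : M} (h : g e₂ e₁ = g e₁ e₂) (x₁ x₂ : R) :
    g (x₁ • e₁ + x₂ • e₂) (x₁ • e₁ + x₂ • e₂)
      = x₁ ^ 2 * g e₁ e₁ + 2 * x₁ * x₂ * g e₁ e₂ + x₂ ^ 2 * g e₂ e₂ := by
  simp only [map_add, map_smul, LinearMap.add_apply, LinearMap.smul_apply, smul_eq_mul, h]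
  ring

theorem stmt_5_general {V : Type*} [AddCommGroup V] [Module ℝ V]
    (g : LinearMap.BilinForm ℝ V) (hsymm : ∀ x y, g x y = g y x)
    (u s e1 e2 : V)
    (huu : g u u = -1) (hus : g u s = 0)
    (hue1 : g u e1 = 0) (hue2 : g u e2 = 0)
    (hpd : ∀ x1 x2 : ℝ, ¬(x1 = 0 ∧ x2 = 0) →
      0 < x1 ^ 2 * g e1 e1 + 2 * x1 * x2 * g e1 e2 + x2 ^ 2 * g e2 e2)
    (ρ p F β α c1 c2 η1 η2 : ℝ)
    (hρp : ρ + p ≠ 0) (hF : 0 < F)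
    (n : Module.Dual ℝ V) (hns : n s ≠ 0)
    (hηnz : ¬(η1 = 0 ∧ η2 = 0))
    (ζ η v : V)
    (hζ : ζ = (F * Real.cosh β) • u - (F * Real.sinh β * Real.cos α) • s
            + c1 • e1 + c2 • e2)
    (hη : η = η1 • e1 + η2 • e2)
    (hguv : g u v = -((c1 ^ 2 * g e1 e1 + 2 * c1 * c2 * g e1 e2 + c2 ^ 2 * g e2 e2) * n s)
        / (F * Real.cosh β))
    (hgηv : g η v = 0) (hgζv : g ζ v = 0)
    (R : V → V → V → V → ℝ)
    (hR : ∀ a b m w, R a b m w =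
      (ρ + p) / 2 * (g u a * g u m * g b w - g u a * g u w * g b m
        + g u b * g u w * g a m - g u b * g u m * g a w)
      + ρ / 3 * (g a m * g b w - g a w * g b m))
    (hR0 : R ζ η η v = 0) :
    (ρ + p) / 2 * n s * (c1 ^ 2 * g e1 e1 + 2 * c1 * c2 * g e1 e2 + c2 ^ 2 * g e2 e2)
        * (η1 ^ 2 * g e1 e1 + 2 * η1 * η2 * g e1 e2 + η2 ^ 2 * g e2 e2) = 0
      ∧ c1 = 0 ∧ c2 = 0 := by
  set C := c1 ^ 2 * g e1 e1 + 2 * c1 * c2 * g e1 e2 + c2 ^ 2 * g e2 e2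
  set H := η1 ^ 2 * g e1 e1 + 2 * η1 * η2 * g e1 e2 + η2 ^ 2 * g e2 e2
  have hFcosh : F * Real.cosh β ≠ 0 := mul_ne_zero hF.ne' (Real.cosh_pos β).ne'
  have huη : g u η = 0 := by simp [hη, hue1, hue2]
  have huζ : g u ζ = -(F * Real.cosh β) := by simp [hζ, huu, hus, hue1, hue2]
  have hηη : g η η = H := hη ▸ g.apply_add_smul_self (hsymm e2 e1) η1 η2
  have hRζη : R ζ η η v = -((ρ + p) / 2 * n s * C * H) := by
    rw [hR, ← perfectFluidRiemann, perfectFluidRiemann_of_orthogonal g u ρ p huη hgηv hgζv,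
      huζ, hguv, hηη]
    field_simp
  have key : (ρ + p) / 2 * n s * C * H = 0 := neg_eq_zero.mp (hRζη ▸ hR0)
  have hC : C = 0 := by
    have hcoef : (ρ + p) / 2 * n s ≠ 0 := mul_ne_zero (div_ne_zero hρp two_ne_zero) hns
    have hH : H ≠ 0 := (hpd η1 η2 hηnz).ne'
    simpa [hcoef, hH] using key
  refine ⟨key, not_not.mp fun hc => (hpd c1 c2 hc).ne' hC⟩

/-- The algebraic core of eq. (main1): with the FLRW Riemann tensor,
`ζ = F cosh β u − F sinh β cos α s + c¹e₁ + c²e₂`, `η = η¹e₁ + η²e₂ ≠ 0`,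
`h_{AB} c^A η^B = 0`, and `v` satisfying `g(u,v) = −(h_{CD}c^Cc^D) n(s)/(F cosh β)`,
`g(η,v) = g(ζ,v) = 0`, the vanishing `R(ζ,η,η,v) = 0` gives
`(ρ+p)/2 · n(s) · (h_{CD}c^Cc^D) · (h_{AB}η^Aη^B) = 0` and hence `c¹ = c² = 0`. -/
theorem stmt_5 {V : Type*} [AddCommGroup V] [Module ℝ V]
    (g : LinearMap.BilinForm ℝ V) (hsymm : ∀ x y, g x y = g y x)
    (u s e1 e2 : V)
    (huu : g u u = -1) (hss : g s s = 1) (hus : g u s = 0)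
    (hue1 : g u e1 = 0) (hue2 : g u e2 = 0)
    (hse1 : g s e1 = 0) (hse2 : g s e2 = 0)
    (hpd : ∀ x1 x2 : ℝ, ¬(x1 = 0 ∧ x2 = 0) →
      0 < x1 ^ 2 * g e1 e1 + 2 * x1 * x2 * g e1 e2 + x2 ^ 2 * g e2 e2)
    (ρ p F β α c1 c2 η1 η2 : ℝ)
    (hρp : ρ + p ≠ 0) (hF : 0 < F)
    (n : Module.Dual ℝ V) (hns : n s ≠ 0)
    (hηnz : ¬(η1 = 0 ∧ η2 = 0))
    (ζ η v : V)
    (hζ : ζ = (F * Real.cosh β) • u - (F * Real.sinh β * Real.cos α) • s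
            + c1 • e1 + c2 • e2)
    (hη : η = η1 • e1 + η2 • e2)
    (hcη : g e1 e1 * c1 * η1 + g e1 e2 * (c1 * η2 + c2 * η1) + g e2 e2 * c2 * η2 = 0)
    (hguv : g u v = -((c1 ^ 2 * g e1 e1 + 2 * c1 * c2 * g e1 e2 + c2 ^ 2 * g e2 e2) * n s)
        / (F * Real.cosh β))
    (hgηv : g η v = 0) (hgζv : g ζ v = 0)
    (R : V → V → V → V → ℝ)
    (hR : ∀ a b m w, R a b m w =
      (ρ + p) / 2 * (g u a * g u m * g b w - g u a * g u w * g b m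
        + g u b * g u w * g a m - g u b * g u m * g a w)
      + ρ / 3 * (g a m * g b w - g a w * g b m))
    (hR0 : R ζ η η v = 0) :
    (ρ + p) / 2 * n s * (c1 ^ 2 * g e1 e1 + 2 * c1 * c2 * g e1 e2 + c2 ^ 2 * g e2 e2)
        * (η1 ^ 2 * g e1 e1 + 2 * η1 * η2 * g e1 e2 + η2 ^ 2 * g e2 e2) = 0
      ∧ c1 = 0 ∧ c2 = 0 :=
  stmt_5_general g hsymm u s e1 e2 huu hus hue1 hue2 hpd ρ p F β α c1 c2 η1 η2 hρp hF n hns hηnz ζ η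
    v hζ hη hguv hgηv hgζv R hR hR0
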